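/- Let c, c̃ : [0,L] → 𝕊² be unit-speed spherical curves with geodesic curvatures satisfying k(s) ≥ |k̃(s)|, and let R : [0,L] → (0,∞) be C². Define P(s) = R(s) c(s) and P̃(s) = R(s) c̃(s). Then |P'(s) × P''(s)| ≥ |P̃'(s) × P̃''(s)| for all s, and consequently the curvature of P (as a space curve in ℝ³) is at least that of P̃ at each s. -/

import Mathlib

open scoped RealInnerProductSpace

/-- The cross product in `ℝ³`. -/
noncomputable def cross3 (u v : EuclideanSpace ℝ (Fin 3)) : EuclideanSpace ℝ (Fin 3) :=
  (WithLp.equiv 2 _).symm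
    ![u 1 * v 2 - u 2 * v 1, u 2 * v 0 - u 0 * v 2, u 0 * v 1 - u 1 * v 0]

lemma cross3_apply (u v : EuclideanSpace ℝ (Fin 3)) (i : Fin 3) :
    cross3 u v i = ![u 1 * v 2 - u 2 * v 1, u 2 * v 0 - u 0 * v 2, u 0 * v 1 - u 1 * v 0] i := rfl

lemma cross3_comb (u v : EuclideanSpace ℝ (Fin 3)) (a b d e f : ℝ) :
    cross3 (a•u + b•v) (d•u + e•v + f•cross3 u v)
      = (a*f*⟪u,v⟫ + b*f*⟪v,v⟫) • u - (a*f*⟪u,u⟫ + b*f*⟪u,v⟫) • v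
        + (a*e - b*d) • cross3 u v := by
  ext i
  fin_cases i <;>
    simp [cross3_apply, PiLp.add_apply, PiLp.sub_apply, PiLp.smul_apply,
      smul_eq_mul, Fin.sum_univ_three, RCLike.inner_apply, PiLp.inner_apply,
        -real_inner_self_eq_norm_sq, EuclideanSpace.real_norm_sq_eq] <;> ring

lemma inner_comb (u v : EuclideanSpace ℝ (Fin 3)) (x y z : ℝ) :
    ⟪x•u + y•v + z•cross3 u v, x•u + y•v + z•cross3 u v⟫
      = x^2*⟪u,u⟫ + y^2*⟪v,v⟫ + 2*x*y*⟪u,v⟫ + z^2*(⟪u,u⟫*⟪v,v⟫ - ⟪u,v⟫^2) := by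
  simp only [cross3_apply, PiLp.add_apply, PiLp.smul_apply, smul_eq_mul,
    Fin.sum_univ_three, RCLike.inner_apply, PiLp.inner_apply, conj_trivial]
  simp only [Matrix.cons_val_zero, Matrix.cons_val_one, Matrix.head_cons,
    Matrix.cons_val_two, Matrix.tail_cons]
  ring

lemma norm_sq_comb (u v : EuclideanSpace ℝ (Fin 3)) (hu : ⟪u,u⟫ = 1) (hv : ⟪v,v⟫ = 1)
    (huv : ⟪u,v⟫ = 0) (x y z : ℝ) :
    ‖x•u + y•v + z•cross3 u v‖^2 = x^2 + y^2 + z^2 := by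
  rw [← real_inner_self_eq_norm_sq, inner_comb, hu, hv, huv]; ring

lemma curve_norms
    (c T : ℝ → EuclideanSpace ℝ (Fin 3)) (k R R' R'' : ℝ → ℝ)
    (P' P'' : ℝ → EuclideanSpace ℝ (Fin 3))
    (hsphere : ∀ s, ‖c s‖ = 1)
    (hc : ∀ s, HasDerivAt c (T s) s)
    (hunit : ∀ s, ‖T s‖ = 1)
    (hT : ∀ s, HasDerivAt T (k s • cross3 (c s) (T s) - c s) s)
    (hR : ∀ s, HasDerivAt R (R' s) s)
    (hR' : ∀ s, HasDerivAt R' (R'' s) s)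
    (hP : ∀ s, HasDerivAt (fun u => R u • c u) (P' s) s)
    (hP' : ∀ s, HasDerivAt P' (P'' s) s) (s : ℝ) :
    ‖P' s‖^2 = R' s^2 + R s^2 ∧
    ‖cross3 (P' s) (P'' s)‖^2
      = (R s^2 * (R s^2 + R' s^2)) * k s^2 + (2*R' s^2 - R s*R'' s + R s^2)^2 := by
  have hu : ⟪c s, c s⟫ = 1 := by rw [real_inner_self_eq_norm_sq, hsphere]; norm_num
  have hv : ⟪T s, T s⟫ = 1 := by rw [real_inner_self_eq_norm_sq, hunit]; norm_num
  have huv : ⟪c s, T s⟫ = 0 := by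
    have hd : HasDerivAt (fun t => ⟪c t, c t⟫) (⟪c s, T s⟫ + ⟪T s, c s⟫) s :=
      (hc s).inner ℝ (hc s)
    have hconst : (fun t => ⟪c t, c t⟫) = fun _ => (1:ℝ) := funext fun t => by
      rw [real_inner_self_eq_norm_sq, hsphere]; norm_num
    rw [hconst] at hd
    have h0 := hd.unique (hasDerivAt_const _ _)
    rw [real_inner_comm (T s)] at h0
    rw [real_inner_comm]
    linarith
  have hP'eq : ∀ t, P' t = R' t • c t + R t • T t := fun t => by
    have := (hP t).unique ((hR t).smul (hc t)); rw [this, add_comm]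
  have hfun : P' = fun t => R' t • c t + R t • T t := funext hP'eq
  have hD : HasDerivAt (fun t => R' t • c t + R t • T t)
      ((R' s • T s + R'' s • c s) + (R s • (k s • cross3 (c s) (T s) - c s) + R' s • T s)) s :=
    ((hR' s).smul (hc s)).add ((hR s).smul (hT s))
  have hP''eq : P'' s = (R'' s - R s) • c s + (2*R' s) • T s
      + (R s * k s) • cross3 (c s) (T s) := by
    have h2 := hP' s
    rw [hfun] at h2
    rw [h2.unique hD]
    module
  constructor
  · rw [hP'eq s]
    have h := norm_sq_comb (c s) (T s) hu hv huv (R' s) (R s) 0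
    simpa using h
  · have hcr : cross3 (P' s) (P'' s)
        = (R s*(R s*k s)) • c s + (-(R' s*(R s*k s))) • T s
          + (R' s*(2*R' s) - R s*(R'' s - R s)) • cross3 (c s) (T s) := by
      rw [hP'eq s, hP''eq, cross3_comb, hu, hv, huv]
      module
    rw [hcr, norm_sq_comb _ _ hu hv huv]
    ring

/-- **Curvature comparison of radially scaled spherical curves.**  If `c, ct` are unit-speed
spherical curves with geodesic curvatures satisfying `k s ≥ |kt s|`, `R > 0` is `C²`, and
`P s = R s • c s`, `Pt s = R s • ct s`, then `‖P' × P''‖ ≥ ‖Pt' × Pt''‖`, and consequently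
the space-curve curvature `‖P' × P''‖ / ‖P'‖³` of `P` is at least that of `Pt`. -/
theorem radially_scaled_curvature_comparison
    (L : ℝ) (hL : 0 < L)
    (c T : ℝ → EuclideanSpace ℝ (Fin 3)) (k : ℝ → ℝ)
    (ct Tt : ℝ → EuclideanSpace ℝ (Fin 3)) (kt : ℝ → ℝ)
    (R R' R'' : ℝ → ℝ)
    (P' P'' Pt' Pt'' : ℝ → EuclideanSpace ℝ (Fin 3))
    (hsphere : ∀ s, ‖c s‖ = 1)
    (hc : ∀ s, HasDerivAt c (T s) s)
    (hunit : ∀ s, ‖T s‖ = 1)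
    (hT : ∀ s, HasDerivAt T (k s • cross3 (c s) (T s) - c s) s)
    (hspheret : ∀ s, ‖ct s‖ = 1)
    (hct : ∀ s, HasDerivAt ct (Tt s) s)
    (hunitt : ∀ s, ‖Tt s‖ = 1)
    (hTt : ∀ s, HasDerivAt Tt (kt s • cross3 (ct s) (Tt s) - ct s) s)
    (hcomp : ∀ s, |kt s| ≤ k s)
    (hR : ∀ s, HasDerivAt R (R' s) s)
    (hR' : ∀ s, HasDerivAt R' (R'' s) s)
    (hRpos : ∀ s, 0 < R s)
    (hP : ∀ s, HasDerivAt (fun u => R u • c u) (P' s) s)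
    (hP' : ∀ s, HasDerivAt P' (P'' s) s)
    (hPt : ∀ s, HasDerivAt (fun u => R u • ct u) (Pt' s) s)
    (hPt' : ∀ s, HasDerivAt Pt' (Pt'' s) s) :
    ∀ s ∈ Set.Icc 0 L,
      ‖cross3 (Pt' s) (Pt'' s)‖ ≤ ‖cross3 (P' s) (P'' s)‖ ∧
      ‖cross3 (Pt' s) (Pt'' s)‖ / ‖Pt' s‖ ^ 3 ≤ ‖cross3 (P' s) (P'' s)‖ / ‖P' s‖ ^ 3 := by
  intro s _
  obtain ⟨e1, e2⟩ := curve_norms c T k R R' R'' P' P'' hsphere hc hunit hT hR hR' hP hP' s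
  obtain ⟨f1, f2⟩ := curve_norms ct Tt kt R R' R'' Pt' Pt'' hspheret hct hunitt hTt hR hR' hPt hPt' s
  have hkt : kt s^2 ≤ k s^2 := by
    have h := hcomp s
    nlinarith [sq_abs (kt s), abs_nonneg (kt s)]
  have hsq : ‖cross3 (Pt' s) (Pt'' s)‖^2 ≤ ‖cross3 (P' s) (P'' s)‖^2 := by
    rw [e2, f2]
    have hnn : (0:ℝ) ≤ R s^2 * (R s^2 + R' s^2) := by positivity
    nlinarith [mul_le_mul_of_nonneg_left hkt hnn]
  have h1 : ‖cross3 (Pt' s) (Pt'' s)‖ ≤ ‖cross3 (P' s) (P'' s)‖ := by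
    have h := Real.sqrt_le_sqrt hsq
    rwa [Real.sqrt_sq (norm_nonneg _), Real.sqrt_sq (norm_nonneg _)] at h
  have hnorm : ‖Pt' s‖ = ‖P' s‖ := by
    rw [← Real.sqrt_sq (norm_nonneg (Pt' s)), ← Real.sqrt_sq (norm_nonneg (P' s)), e1, f1]
  have hpos : 0 < ‖P' s‖ := by
    have hr := hRpos s
    nlinarith [norm_nonneg (P' s), sq_nonneg (R' s)]
  refine ⟨h1, ?_⟩
  rw [hnorm]
  exact div_le_div_of_nonneg_right h1 (pow_pos hpos 3).le
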